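/- (Lemma 1 of the paper.) Let {A⁽ⁿ⁾ : n = 1,…,N} be independent random matrices such that, for each n, the rows â⁽ⁿ⁾_{i_n} of A⁽ⁿ⁾ are mutually independent, and let â⁽ᴺ⁺¹⁾ be a random vector independent of all A⁽ⁿ⁾. Then E[‖[[A⁽¹⁾,…,A⁽ᴺ⁾; â⁽ᴺ⁺¹⁾]]‖_F²] = Σ_{i₁,…,i_N} ⟨ E[â⁽¹⁾_{i₁} â⁽¹⁾ᵀ_{i₁}], …, E[â⁽ᴺ⁾_{i_N} â⁽ᴺ⁾ᵀ_{i_N}], E[â⁽ᴺ⁺¹⁾ â⁽ᴺ⁺¹⁾ᵀ] ⟩, where the generalized inner product of N+1 matrices in ℝ^{R×R} is the sum over all (r,r') of the products of their (r,r') entries. -/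

import Mathlib

/-!
Expanding the square, the `(i, r, r')` cross term is the product, over the `N + 1` random vectors
selected by the multi-index `i` (one row of each factor matrix, and `â⁽ᴺ⁺¹⁾`), of the scalars
`x r * x r'`. These scalars are independent, and integrable because the coordinates are in `L²`;
their product is then integrable, as the law of the family is a product measure, and its
expectation is the product of the expectations.
-/

open MeasureTheory ProbabilityTheory Finset

section

variable {Ω : Type*} [MeasurableSpace Ω] {μ : Measure Ω}

lemma ProbabilityTheory.iIndepFun.integrable_fun_prod {ι 𝕜 : Type*} [Fintype ι] [RCLike 𝕜]
    {X : ι → Ω → 𝕜} (hX : iIndepFun X μ) (hint : ∀ i, Integrable (X i) μ) :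
    Integrable (fun ω => ∏ i, X i ω) μ := by
  have := hX.isProbabilityMeasure
  have mX : ∀ i, AEMeasurable (X i) μ := fun i => (hint i).aemeasurable
  have hmap : Integrable (fun x : ι → 𝕜 => ∏ i, x i) (μ.map fun ω i => X i ω) := by
    rw [hX.map_fun_eq_pi_map mX]
    exact Integrable.fintype_prod fun i =>
      (integrable_map_measure aestronglyMeasurable_id (mX i)).2 (hint i)
  exact (integrable_map_measure (by fun_prop) (aemeasurable_pi_lambda _ mX)).1 hmap

variable {κ ρ : Type*} {Y : κ → Ω → ρ → ℝ}

lemma ProbabilityTheory.iIndepFun.apply_mul_apply (hY : iIndepFun Y μ) (r r' : ρ) :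
    iIndepFun (fun j ω => Y j ω r * Y j ω r') μ :=
  hY.comp (fun _ v => v r * v r') fun _ => (measurable_pi_apply r).mul (measurable_pi_apply r')

variable [Fintype κ]

lemma ProbabilityTheory.iIndepFun.integrable_prod_apply_mul_apply (hY : iIndepFun Y μ)
    (hL2 : ∀ j r, MemLp (fun ω => Y j ω r) 2 μ) (r r' : ρ) :
    Integrable (fun ω => ∏ j, Y j ω r * Y j ω r') μ :=
  (hY.apply_mul_apply r r').integrable_fun_prod fun j => (hL2 j r).integrable_mul (hL2 j r')

lemma ProbabilityTheory.iIndepFun.integral_prod_apply_mul_apply (hY : iIndepFun Y μ)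
    (hL2 : ∀ j r, MemLp (fun ω => Y j ω r) 2 μ) (r r' : ρ) :
    ∫ ω, ∏ j, Y j ω r * Y j ω r' ∂μ = ∏ j, ∫ ω, Y j ω r * Y j ω r' ∂μ :=
  (hY.apply_mul_apply r r').integral_fun_prod_eq_prod_integral fun j =>
    ((hL2 j r).integrable_mul (hL2 j r')).aestronglyMeasurable

end

section

variable {Ω ι : Type*} [MeasurableSpace Ω] {μ : Measure Ω} {s : Finset ι} {c : ι → Ω → ℝ}

lemma integrable_sum_sq (hc : ∀ r r', Integrable (fun ω => c r ω * c r' ω) μ) :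
    Integrable (fun ω => (∑ r ∈ s, c r ω) ^ 2) μ := by
  simp_rw [sq, sum_mul_sum]
  exact integrable_finsetSum _ fun r _ => integrable_finsetSum _ fun r' _ => hc r r'

lemma integral_sum_sq (hc : ∀ r r', Integrable (fun ω => c r ω * c r' ω) μ) :
    ∫ ω, (∑ r ∈ s, c r ω) ^ 2 ∂μ = ∑ r ∈ s, ∑ r' ∈ s, ∫ ω, c r ω * c r' ω ∂μ := by
  simp_rw [sq, sum_mul_sum]
  rw [integral_finsetSum _ fun r _ => integrable_finsetSum _ fun r' _ => hc r r']
  exact sum_congr rfl fun r _ => integral_finsetSum _ fun r' _ => hc r r'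

end

theorem expected_frobenius_sq_cp_general
    {Ω : Type*} [MeasurableSpace Ω] (P : Measure Ω)
    {N R : ℕ} {I : Fin N → ℕ}
    (A : ∀ n, Ω → Fin (I n) → Fin R → ℝ)   -- rows of the random factor matrices
    (aT : Ω → Fin R → ℝ)                    -- the extra (temporal) random vector
    (hL2A : ∀ n i r, MemLp (fun ω => A n ω i r) 2 P)
    (hL2T : ∀ r, MemLp (fun ω => aT ω r) 2 P)
    (f : Option ((n : Fin N) × Fin (I n)) → Ω → Fin R → ℝ)
    (hf_some : ∀ n i, f (some ⟨n, i⟩) = fun ω => A n ω i)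
    (hf_none : f none = aT)
    (hindep : iIndepFun f P) :
    ∫ ω, ∑ i : (∀ n, Fin (I n)), (∑ r, (∏ n, A n ω (i n) r) * aT ω r) ^ 2 ∂P
      = ∑ i : (∀ n, Fin (I n)), ∑ r, ∑ r',
          (∏ n, ∫ ω, A n ω (i n) r * A n ω (i n) r' ∂P) *
            ∫ ω, aT ω r * aT ω r' ∂P := by
  have hL2 : ∀ j r, MemLp (fun ω => f j ω r) 2 P := by
    rintro (_ | ⟨n, k⟩) r
    · simpa [hf_none] using hL2T r
    · simpa [hf_some] using hL2A n k r
  -- `row i none = aT` and `row i (some n) = A n · (i n)`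
  let row (i : ∀ n, Fin (I n)) (j : Option (Fin N)) := f (j.map fun n => ⟨n, i n⟩)
  have hrow : ∀ i, iIndepFun (row i) P := fun i =>
    hindep.precomp (Option.map_injective fun _ _ h => congrArg Sigma.fst h)
  have hrowL2 : ∀ i j r, MemLp (fun ω => row i j ω r) 2 P := fun i j => hL2 _
  have hfactor : ∀ (i : ∀ n, Fin (I n)) r r' ω,
      (∏ n, A n ω (i n) r) * aT ω r * ((∏ n, A n ω (i n) r') * aT ω r')
        = ∏ j, row i j ω r * row i j ω r' := by
    intro i r r' ω
    simp only [row, Fintype.prod_option, Option.map_none, Option.map_some, hf_none, hf_some,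
      prod_mul_distrib]
    ring
  have hint : ∀ (i : ∀ n, Fin (I n)) r r', Integrable
      (fun ω => (∏ n, A n ω (i n) r) * aT ω r * ((∏ n, A n ω (i n) r') * aT ω r')) P := by
    intro i r r'
    simpa only [hfactor] using (hrow i).integrable_prod_apply_mul_apply (hrowL2 i) r r'
  rw [integral_finsetSum _ fun i _ => integrable_sum_sq (hint i)]
  refine sum_congr rfl fun i _ => ?_
  rw [integral_sum_sq (hint i)]
  refine sum_congr rfl fun r _ => sum_congr rfl fun r' _ => ?_
  simp only [hfactor]
  rw [(hrow i).integral_prod_apply_mul_apply (hrowL2 i), Fintype.prod_option, mul_comm]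
  simp only [row, Option.map_none, Option.map_some, hf_none, hf_some]

/-- Lemma 1 of the paper: if the rows of the random factor matrices `A⁽¹⁾,…,A⁽ᴺ⁾` and the
random vector `â⁽ᴺ⁺¹⁾` are all mutually independent (equivalently: the matrices are
independent, the rows within each matrix are independent, and `â⁽ᴺ⁺¹⁾` is independent of
all of them), then
`E‖[[A⁽¹⁾,…,A⁽ᴺ⁾; â⁽ᴺ⁺¹⁾]]‖_F² = Σ_i ⟨E[â⁽¹⁾_{i₁}â⁽¹⁾ᵀ_{i₁}],…,E[â⁽ᴺ⁺¹⁾â⁽ᴺ⁺¹⁾ᵀ]⟩`,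
where the generalized inner product of `R×R` matrices sums over all `(r,r')` the products
of their `(r,r')` entries. -/
theorem expected_frobenius_sq_cp
    {Ω : Type*} [MeasurableSpace Ω] (P : Measure Ω) [IsProbabilityMeasure P]
    {N R : ℕ} {I : Fin N → ℕ}
    (A : ∀ n, Ω → Fin (I n) → Fin R → ℝ)   -- rows of the random factor matrices
    (aT : Ω → Fin R → ℝ)                    -- the extra (temporal) random vector
    (hmeasA : ∀ n i, Measurable (fun ω => A n ω i))
    (hmeasT : Measurable aT)
    (hL2A : ∀ n i r, MemLp (fun ω => A n ω i r) 2 P)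
    (hL2T : ∀ r, MemLp (fun ω => aT ω r) 2 P)
    (f : Option ((n : Fin N) × Fin (I n)) → Ω → Fin R → ℝ)
    (hf_some : ∀ n i, f (some ⟨n, i⟩) = fun ω => A n ω i)
    (hf_none : f none = aT)
    (hindep : iIndepFun f P) :
    ∫ ω, ∑ i : (∀ n, Fin (I n)), (∑ r, (∏ n, A n ω (i n) r) * aT ω r) ^ 2 ∂P
      = ∑ i : (∀ n, Fin (I n)), ∑ r, ∑ r',
          (∏ n, ∫ ω, A n ω (i n) r * A n ω (i n) r' ∂P) *
            ∫ ω, aT ω r * aT ω r' ∂P :=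
  expected_frobenius_sq_cp_general P A aT hL2A hL2T f hf_some hf_none hindep
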